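/- (Bongartz–Eklof–Trlifaj Lemma) Let (A;E) be an exact category with exact coproducts, let B be an object of A, and let a: A0 → A1 be a morphism such that I = Ext_{Arr(A)}(a, 1_B) is a set. For each ζ ∈ I choose a representing conflation of arrows 1_B → c^ζ → a with inflation m^ζ: 1_B → c^ζ. Then the pushout m = ⨿_{1_B} m^ζ : 1_B → ⨿ c^ζ in (Arr(A); Arr(E)), which fits in a conflation of arrows 1_B → ⨿_{1_B} c^ζ → a^{(I)}, has domain component m_0: B → C_0 that is a special a⊥-preenvelope of B; in particular, the ideal a⊥ is special preenveloping. -/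
import Mathlib


open CategoryTheory CategoryTheory.Limits

universe w v u

namespace IdealApprox

/-- The data of an exact structure: a class of composable pairs
(the "conflations" `B ⟶ C ⟶ X`). -/
structure ExactStructureData (A : Type u) [Category.{v} A] [Preadditive A] :
    Type (max u v) where
  conf : ∀ ⦃B C X : A⦄, (B ⟶ C) → (C ⟶ X) → Prop

/-- An ideal of an additive category: an additive subbifunctor of `Hom`. -/
structure Ideal (A : Type u) [Category.{v} A] [Preadditive A] : Type (max u v) where
  mem : ∀ ⦃X Y : A⦄, (X ⟶ Y) → Prop
  zero_mem : ∀ X Y : A, mem (0 : X ⟶ Y)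
  add_mem : ∀ ⦃X Y : A⦄ ⦃f g : X ⟶ Y⦄, mem f → mem g → mem (f + g)
  neg_mem : ∀ ⦃X Y : A⦄ ⦃f : X ⟶ Y⦄, mem f → mem (-f)
  comp_mem : ∀ ⦃W X Y Z : A⦄ (h : W ⟶ X) ⦃g : X ⟶ Y⦄ (k : Y ⟶ Z), mem g → mem (h ≫ g ≫ k)

/-- A class of morphisms of a category. -/
abbrev MorClass (A : Type u) [Category.{v} A] : Type (max u v) :=
  ∀ ⦃X Y : A⦄, (X ⟶ Y) → Prop

variable {A : Type u} [Category.{v} A] [Preadditive A]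

/-- `(i, p)` is a kernel-cokernel pair. -/
structure IsKernelCokernelPair {B C X : A} (i : B ⟶ C) (p : C ⟶ X) : Prop where
  w : i ≫ p = 0
  isKernel : Nonempty (IsLimit (KernelFork.ofι i w))
  isCokernel : Nonempty (IsColimit (CokernelCofork.ofπ p w))

/-- The maximal candidate exact structure: all kernel-cokernel pairs.  On an abelian
category (such as a module category) this is the standard exact (abelian) structure. -/
def maxExact (A : Type u) [Category.{v} A] [Preadditive A] : ExactStructureData A :=
  ⟨fun _ _ _ i p => IsKernelCokernelPair i p⟩

/-- `m` is an inflation: it occurs as the first map of a conflation. -/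
def ExactStructureData.IsInflation (E : ExactStructureData A) {B C : A} (m : B ⟶ C) : Prop :=
  ∃ (X : A) (p : C ⟶ X), E.conf m p

/-- `p` is a deflation: it occurs as the second map of a conflation. -/
def ExactStructureData.IsDeflation (E : ExactStructureData A) {C X : A} (p : C ⟶ X) : Prop :=
  ∃ (B : A) (i : B ⟶ C), E.conf i p

/-- The axioms of a Quillen exact category `(A; E)`. -/
structure ExactStructureData.IsExact (E : ExactStructureData A) : Prop where
  ker_coker : ∀ ⦃B C X : A⦄ ⦃i : B ⟶ C⦄ ⦃p : C ⟶ X⦄, E.conf i p → IsKernelCokernelPair i p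
  iso_closed : ∀ ⦃B C X B' C' X' : A⦄ ⦃i : B ⟶ C⦄ ⦃p : C ⟶ X⦄ ⦃i' : B' ⟶ C'⦄ ⦃p' : C' ⟶ X'⦄
      (eB : B ≅ B') (eC : C ≅ C') (eX : X ≅ X'),
      i ≫ eC.hom = eB.hom ≫ i' → p ≫ eX.hom = eC.hom ≫ p' → E.conf i p → E.conf i' p'
  id_inflation : ∀ X : A, E.IsInflation (𝟙 X)
  id_deflation : ∀ X : A, E.IsDeflation (𝟙 X)
  comp_inflation : ∀ ⦃X Y Z : A⦄ ⦃f : X ⟶ Y⦄ ⦃g : Y ⟶ Z⦄,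
      E.IsInflation f → E.IsInflation g → E.IsInflation (f ≫ g)
  comp_deflation : ∀ ⦃X Y Z : A⦄ ⦃f : X ⟶ Y⦄ ⦃g : Y ⟶ Z⦄,
      E.IsDeflation f → E.IsDeflation g → E.IsDeflation (f ≫ g)
  pushout_inflation : ∀ ⦃X Y Z : A⦄ (m : X ⟶ Y) (f : X ⟶ Z), E.IsInflation m →
      ∃ (W : A) (g : Y ⟶ W) (m' : Z ⟶ W), IsPushout m f g m' ∧ E.IsInflation m'
  pullback_deflation : ∀ ⦃X Y Z : A⦄ (p : Y ⟶ X) (f : Z ⟶ X), E.IsDeflation p →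
      ∃ (W : A) (g : W ⟶ Y) (p' : W ⟶ Z), IsPullback g p' p f ∧ E.IsDeflation p'

/-- `Ext(a,b) = 0`: the composite `Ext(A1,B0) ⟶ Ext(A0,B1)` (pullback along `a`
followed by pushout along `b`) vanishes.  Elementwise: for every conflation
`B0 ⟶ C ⟶ A1` and every pushout of it along `b` (a conflation `B1 ⟶ C' ⟶ A1`),
the morphism `a` lifts along the deflation `C' ⟶ A1`, i.e. the pullback along `a`
of the pushout along `b` splits. -/
def ExtZero (E : ExactStructureData A) {A0 A1 B0 B1 : A} (a : A0 ⟶ A1) (b : B0 ⟶ B1) : Prop :=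
  ∀ ⦃C : A⦄ (i : B0 ⟶ C) (p : C ⟶ A1), E.conf i p →
    ∀ ⦃C' : A⦄ (c : C ⟶ C') (i' : B1 ⟶ C') (p' : C' ⟶ A1),
      IsPushout i b c i' → c ≫ p' = p → i' ≫ p' = 0 →
      ∃ s : A0 ⟶ C', s ≫ p' = a

/-- The class of morphisms left `Ext`-orthogonal to every member of `M`. -/
def leftPerp (E : ExactStructureData A) (M : MorClass A) : MorClass A :=
  fun _ _ a => ∀ ⦃B0 B1 : A⦄ (b : B0 ⟶ B1), M b → ExtZero E a b

/-- The class of morphisms right `Ext`-orthogonal to every member of `M`. -/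
def rightPerp (E : ExactStructureData A) (M : MorClass A) : MorClass A :=
  fun _ _ b => ∀ ⦃A0 A1 : A⦄ (a : A0 ⟶ A1), M a → ExtZero E a b

/-- Intersection of two classes of morphisms. -/
def interClass (M N : MorClass A) : MorClass A := fun _ _ f => M f ∧ N f

/-- Intersection of a set-indexed family of classes of morphisms. -/
def interFamily {ι : Type w} (J : ι → MorClass A) : MorClass A := fun _ _ f => ∀ i, J i f

/-- `j : B ⟶ C0` is a special `J`-preenvelope of `B`: it belongs to `J` and appears as the
inflation of a conflation admitting a morphism of conflations (identity on `B`) whose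
right-hand component lies in `⊥J`. -/
def IsSpecialPreenvelope (E : ExactStructureData A) (J : MorClass A) {B C0 : A}
    (j : B ⟶ C0) : Prop :=
  J j ∧ ∃ (A0 A1 C1 : A) (p0 : C0 ⟶ A0) (j' : B ⟶ C1) (p1 : C1 ⟶ A1)
      (c : C0 ⟶ C1) (a : A0 ⟶ A1),
    E.conf j p0 ∧ E.conf j' p1 ∧ j ≫ c = j' ∧ p0 ≫ a = c ≫ p1 ∧ leftPerp E J a

/-- `J` is a special preenveloping ideal (class). -/
def SpecialPreenveloping (E : ExactStructureData A) (J : MorClass A) : Prop :=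
  ∀ B : A, ∃ (C0 : A) (j : B ⟶ C0), IsSpecialPreenvelope E J j

/-- `e : D1 ⟶ B` is a special `I`-precover of `B`. -/
def IsSpecialPrecover (E : ExactStructureData A) (I : MorClass A) {D1 B : A}
    (e : D1 ⟶ B) : Prop :=
  I e ∧ ∃ (K0 K1 D0 : A) (i0 : K0 ⟶ D0) (p0 : D0 ⟶ B) (i1 : K1 ⟶ D1)
      (k : K0 ⟶ K1) (d : D0 ⟶ D1),
    E.conf i0 p0 ∧ E.conf i1 e ∧ i0 ≫ d = k ≫ i1 ∧ d ≫ e = p0 ∧ rightPerp E I k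

/-- `I` is a special precovering ideal (class). -/
def SpecialPrecovering (E : ExactStructureData A) (I : MorClass A) : Prop :=
  ∀ B : A, ∃ (D1 : A) (e : D1 ⟶ B), IsSpecialPrecover E I e

/-- The ideal of projective morphisms: morphisms left `Ext`-orthogonal to all morphisms. -/
def projClass (E : ExactStructureData A) : MorClass A :=
  fun _ _ p => ∀ ⦃B0 B1 : A⦄ (b : B0 ⟶ B1), ExtZero E p b

/-- The ideal of injective morphisms: morphisms right `Ext`-orthogonal to all morphisms. -/
def injClass (E : ExactStructureData A) : MorClass A :=
  fun _ _ j => ∀ ⦃A0 A1 : A⦄ (a : A0 ⟶ A1), ExtZero E a j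

/-- Every object is the codomain of a projective morphism. -/
def HasEnoughProjectiveMorphisms (E : ExactStructureData A) : Prop :=
  ∀ X : A, ∃ (P : A) (p : P ⟶ X), projClass E p

/-- Every object is the domain of an injective morphism. -/
def HasEnoughInjectiveMorphisms (E : ExactStructureData A) : Prop :=
  ∀ X : A, ∃ (Y : A) (j : X ⟶ Y), injClass E j

/-- `(I, J)` is an ideal cotorsion pair: `I = ⊥J` and `J = I⊥`. -/
def IsIdealCotorsionPair (E : ExactStructureData A) (I J : MorClass A) : Prop :=
  (∀ ⦃X Y : A⦄ (f : X ⟶ Y), I f ↔ leftPerp E J f) ∧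
  (∀ ⦃X Y : A⦄ (f : X ⟶ Y), J f ↔ rightPerp E I f)

/-- A complete ideal cotorsion pair: `I` is special precovering and `J` is special
preenveloping. -/
def IsCompleteIdealCotorsionPair (E : ExactStructureData A) (I J : MorClass A) : Prop :=
  IsIdealCotorsionPair E I J ∧ SpecialPrecovering E I ∧ SpecialPreenveloping E J

/-- `c = b ⋆ a` is an ME (mono-epi) extension of the arrow `a` by the arrow `b`. -/
def IsMEExtension (E : ExactStructureData A) {B0 B1 A0 A1 C0 C1 : A}
    (b : B0 ⟶ B1) (a : A0 ⟶ A1) (c : C0 ⟶ C1) : Prop :=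
  ∃ (i0 : B0 ⟶ C0) (p0 : C0 ⟶ A0) (i1 : B1 ⟶ C1) (p1 : C1 ⟶ A1)
    (Cm : A) (im : B0 ⟶ Cm) (pm : Cm ⟶ A1) (c1 : C0 ⟶ Cm) (c2 : Cm ⟶ C1),
    E.conf i0 p0 ∧ E.conf i1 p1 ∧ E.conf im pm ∧ c = c1 ≫ c2 ∧
    i0 ≫ c1 = im ∧ c1 ≫ pm = p0 ≫ a ∧ im ≫ c2 = b ≫ i1 ∧ c2 ≫ p1 = pm

/-- `I ⋄ K` : the class of all ME-extensions `i ⋆ k` with `i ∈ I`, `k ∈ K`. -/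
def diamond (E : ExactStructureData A) (I K : MorClass A) : MorClass A :=
  fun _ _ c => ∃ (B0 B1 A0 A1 : A) (b : B0 ⟶ B1) (a : A0 ⟶ A1),
    I b ∧ K a ∧ IsMEExtension E b a c

/-- `j` is a `J`-preenvelope (left approximation). -/
def IsPreenvelope (J : MorClass A) {B C : A} (j : B ⟶ C) : Prop :=
  J j ∧ ∀ ⦃C' : A⦄ (j' : B ⟶ C'), J j' → ∃ f : C ⟶ C', j ≫ f = j'

/-- `J` is a preenveloping ideal (class). -/
def Preenveloping (J : MorClass A) : Prop :=
  ∀ B : A, ∃ (C : A) (j : B ⟶ C), IsPreenvelope J j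

/-- `e` is an `I`-precover (right approximation). -/
def IsPrecover (I : MorClass A) {D B : A} (e : D ⟶ B) : Prop :=
  I e ∧ ∀ ⦃D' : A⦄ (e' : D' ⟶ B), I e' → ∃ f : D' ⟶ D, f ≫ e = e'

/-- `I` is a precovering ideal (class). -/
def Precovering (I : MorClass A) : Prop :=
  ∀ B : A, ∃ (D : A) (e : D ⟶ B), IsPrecover I e

/-- `J` is monic preenveloping: every object admits a preenvelope which is an inflation. -/
def MonicPreenveloping (E : ExactStructureData A) (J : MorClass A) : Prop :=
  ∀ B : A, ∃ (C : A) (j : B ⟶ C), E.IsInflation j ∧ IsPreenvelope J j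

/-- `I` is epic precovering: every object admits a precover which is a deflation. -/
def EpicPrecovering (E : ExactStructureData A) (I : MorClass A) : Prop :=
  ∀ B : A, ∃ (D : A) (e : D ⟶ B), E.IsDeflation e ∧ IsPrecover I e

/-- A conflation of arrows `b ⟶ c ⟶ a` in `(Arr(A); Arr(E))`, encoded componentwise:
two conflations `(i0, p0)`, `(i1, p1)` together with the commutativity of the two squares. -/
def IsArrowConf (E : ExactStructureData A) {B0 B1 C0 C1 A0 A1 : A}
    (b : B0 ⟶ B1) (c : C0 ⟶ C1) (a : A0 ⟶ A1)
    (i0 : B0 ⟶ C0) (p0 : C0 ⟶ A0) (i1 : B1 ⟶ C1) (p1 : C1 ⟶ A1) : Prop :=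
  E.conf i0 p0 ∧ E.conf i1 p1 ∧ i0 ≫ c = b ≫ i1 ∧ p0 ≫ a = c ≫ p1

/-- An ME (mono-epi) conflation of arrows, encoded componentwise. -/
def IsMEArrowConf (E : ExactStructureData A) {B0 B1 C0 C1 A0 A1 : A}
    (b : B0 ⟶ B1) (c : C0 ⟶ C1) (a : A0 ⟶ A1)
    (i0 : B0 ⟶ C0) (p0 : C0 ⟶ A0) (i1 : B1 ⟶ C1) (p1 : C1 ⟶ A1) : Prop :=
  IsArrowConf E b c a i0 p0 i1 p1 ∧
  ∃ (Cm : A) (im : B0 ⟶ Cm) (pm : Cm ⟶ A1) (c1 : C0 ⟶ Cm) (c2 : Cm ⟶ C1),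
    E.conf im pm ∧ c = c1 ≫ c2 ∧ i0 ≫ c1 = im ∧ c1 ≫ pm = p0 ≫ a ∧
    im ≫ c2 = b ≫ i1 ∧ c2 ≫ p1 = pm

/-- Equivalence (isomorphism fixing the two end arrows) of conflations of arrows. -/
def ArrowConfEquiv {B0 B1 C0 C1 D0 D1 A0 A1 : A}
    (c : C0 ⟶ C1) (i0 : B0 ⟶ C0) (p0 : C0 ⟶ A0) (i1 : B1 ⟶ C1) (p1 : C1 ⟶ A1)
    (d : D0 ⟶ D1) (j0 : B0 ⟶ D0) (q0 : D0 ⟶ A0) (j1 : B1 ⟶ D1) (q1 : D1 ⟶ A1) : Prop :=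
  ∃ (e0 : C0 ≅ D0) (e1 : C1 ≅ D1),
    c ≫ e1.hom = e0.hom ≫ d ∧ i0 ≫ e0.hom = j0 ∧ e0.hom ≫ q0 = p0 ∧
    i1 ≫ e1.hom = j1 ∧ e1.hom ≫ q1 = p1

/-- `(A; E)` has exact coproducts: coproducts exist and a coproduct of conflations is a
conflation. -/
def HasExactCoproducts [HasCoproducts.{w} A] (E : ExactStructureData A) : Prop :=
  ∀ (ι : Type w) (B C X : ι → A) (i : ∀ j, B j ⟶ C j) (p : ∀ j, C j ⟶ X j),
    (∀ j, E.conf (i j) (p j)) → E.conf (Limits.Sigma.map i) (Limits.Sigma.map p)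

/-- `(A; E)` has exact products: products exist and a product of conflations is a
conflation. -/
def HasExactProducts [HasProducts.{w} A] (E : ExactStructureData A) : Prop :=
  ∀ (ι : Type w) (B C X : ι → A) (i : ∀ j, B j ⟶ C j) (p : ∀ j, C j ⟶ X j),
    (∀ j, E.conf (i j) (p j)) → E.conf (Limits.Pi.map i) (Limits.Pi.map p)

/-- The ideal generated by a set-indexed family of morphisms: finite sums of
composites through the generators. -/
def genIdeal {ι : Type w} {X0 X1 : ι → A} (m : ∀ i, X0 i ⟶ X1 i) : MorClass A :=
  fun X Y f => ∃ (n : ℕ) (j : Fin n → ι) (g : ∀ k : Fin n, X ⟶ X0 (j k))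
    (h : ∀ k : Fin n, X1 (j k) ⟶ Y),
    f = ∑ k : Fin n, g k ≫ m (j k) ≫ h k

/-- The sum of a set-indexed family of ideals: finite sums of members. -/
def idealFamilySum {ι : Type w} (I : ι → Ideal A) : MorClass A :=
  fun X Y f => ∃ (n : ℕ) (j : Fin n → ι) (g : Fin n → (X ⟶ Y)),
    (∀ k, (I (j k)).mem (g k)) ∧ f = ∑ k : Fin n, g k

/-- Containment of ideals. -/
def Ideal.le (I J : Ideal A) : Prop := ∀ ⦃X Y : A⦄ ⦃f : X ⟶ Y⦄, I.mem f → J.mem f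

/-- Intersection of two ideals. -/
def Ideal.inf (I J : Ideal A) : Ideal A where
  mem := fun _ _ f => I.mem f ∧ J.mem f
  zero_mem := fun X Y => ⟨I.zero_mem X Y, J.zero_mem X Y⟩
  add_mem := fun _ _ _ _ hf hg => ⟨I.add_mem hf.1 hg.1, J.add_mem hf.2 hg.2⟩
  neg_mem := fun _ _ _ hf => ⟨I.neg_mem hf.1, J.neg_mem hf.2⟩
  comp_mem := fun _ _ _ _ h _ k hg => ⟨I.comp_mem h k hg.1, J.comp_mem h k hg.2⟩

/-- Sum of two ideals. -/
def Ideal.sum (I J : Ideal A) : Ideal A where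
  mem := fun _ _ f => ∃ g h, I.mem g ∧ J.mem h ∧ f = g + h
  zero_mem := fun X Y => ⟨0, 0, I.zero_mem X Y, J.zero_mem X Y, by simp⟩
  add_mem := by
    rintro X Y f g ⟨f1, f2, hf1, hf2, rfl⟩ ⟨g1, g2, hg1, hg2, rfl⟩
    exact ⟨f1 + g1, f2 + g2, I.add_mem hf1 hg1, J.add_mem hf2 hg2, by abel⟩
  neg_mem := by
    rintro X Y f ⟨f1, f2, h1, h2, rfl⟩
    exact ⟨-f1, -f2, I.neg_mem h1, J.neg_mem h2, by abel⟩
  comp_mem := by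
    rintro W X Y Z h g k ⟨g1, g2, h1, h2, rfl⟩
    exact ⟨h ≫ g1 ≫ k, h ≫ g2 ≫ k, I.comp_mem h k h1, J.comp_mem h k h2, by
      simp [Preadditive.add_comp, Preadditive.comp_add]⟩

/-- An ideal closed under set-indexed coproducts of morphisms. -/
def ClosedUnderCoproducts [HasCoproducts.{w} A] (I : Ideal A) : Prop :=
  ∀ ⦃ι : Type w⦄ ⦃X0 X1 : ι → A⦄ (f : ∀ i, X0 i ⟶ X1 i),
    (∀ i, I.mem (f i)) → I.mem (Limits.Sigma.map f)

/-- An ideal closed under ME-extensions by projective morphisms. -/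
def ClosedUnderProjME (E : ExactStructureData A) (I : Ideal A) : Prop :=
  ∀ ⦃P0 P1 K0 K1 C0 C1 : A⦄ (p : P0 ⟶ P1) (k : K0 ⟶ K1) (c : C0 ⟶ C1),
    projClass E p → I.mem k → IsMEExtension E p k c → I.mem c

/-- `Ext_{Arr(A)}(a, b)` is a set: there is a set-indexed family of conflations of arrows
`b ⟶ c^ζ ⟶ a` representing every conflation of arrows from `b` to `a` up to equivalence. -/
def ExtArrowSmall (E : ExactStructureData A) {A0 A1 B0 B1 : A}
    (a : A0 ⟶ A1) (b : B0 ⟶ B1) : Prop :=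
  ∃ (ι : Type w) (C0 C1 : ι → A) (c : ∀ z, C0 z ⟶ C1 z)
    (i0 : ∀ z, B0 ⟶ C0 z) (p0 : ∀ z, C0 z ⟶ A0) (i1 : ∀ z, B1 ⟶ C1 z) (p1 : ∀ z, C1 z ⟶ A1),
    (∀ z, IsArrowConf E b (c z) a (i0 z) (p0 z) (i1 z) (p1 z)) ∧
    ∀ ⦃D0 D1 : A⦄ (d : D0 ⟶ D1) (j0 : B0 ⟶ D0) (q0 : D0 ⟶ A0) (j1 : B1 ⟶ D1) (q1 : D1 ⟶ A1),
      IsArrowConf E b d a j0 q0 j1 q1 →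
      ∃ z, ArrowConfEquiv (c z) (i0 z) (p0 z) (i1 z) (p1 z) d j0 q0 j1 q1

/-- `Ext(X, B)` is a set: there is a set-indexed family of conflations `B ⟶ C^z ⟶ X`
representing every conflation from `B` to `X` up to equivalence. -/
def ExtObjSmall (E : ExactStructureData A) (X B : A) : Prop :=
  ∃ (ι : Type w) (C : ι → A) (m : ∀ z, B ⟶ C z) (p : ∀ z, C z ⟶ X),
    (∀ z, E.conf (m z) (p z)) ∧
    ∀ ⦃D : A⦄ (m' : B ⟶ D) (p' : D ⟶ X), E.conf m' p' →
      ∃ z, ∃ e : C z ≅ D, m z ≫ e.hom = m' ∧ e.hom ≫ p' = p z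

/-- `Add X`: direct summands of coproducts of copies of `X`. -/
def AddClosure [HasCoproducts.{w} A] (X : A) : A → Prop := fun M =>
  ∃ (ι : Type w) (s : M ⟶ ∐ (fun _ : ι => X)) (r : (∐ fun _ : ι => X) ⟶ M), s ≫ r = 𝟙 M

/-- The object ideal of morphisms factoring through an object of `S`. -/
def objIdeal (S : A → Prop) : MorClass A := fun X Y f =>
  ∃ (M : A) (g : X ⟶ M) (h : M ⟶ Y), S M ∧ f = g ≫ h



section BETHelpers

variable {E : ExactStructureData A}

lemma conf_w (hE : E.IsExact) {B C X : A} {i : B ⟶ C} {p : C ⟶ X} (h : E.conf i p) :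
    i ≫ p = 0 := (hE.ker_coker h).w

lemma conf_epi (hE : E.IsExact) {B C X : A} {i : B ⟶ C} {p : C ⟶ X} (h : E.conf i p) :
    Epi p := by
  obtain ⟨hc⟩ := (hE.ker_coker h).isCokernel
  exact ⟨fun u v huv => Cofork.IsColimit.hom_ext hc (by simpa using huv)⟩

lemma conf_mono (hE : E.IsExact) {B C X : A} {i : B ⟶ C} {p : C ⟶ X} (h : E.conf i p) :
    Mono i := by
  obtain ⟨hl⟩ := (hE.ker_coker h).isKernel
  exact ⟨fun u v huv => Fork.IsLimit.hom_ext hl (by simpa using huv)⟩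

lemma conf_desc (hE : E.IsExact) {B C X : A} {i : B ⟶ C} {p : C ⟶ X} (h : E.conf i p)
    {T : A} (t : C ⟶ T) (ht : i ≫ t = 0) : ∃ u : X ⟶ T, p ≫ u = t := by
  obtain ⟨hc⟩ := (hE.ker_coker h).isCokernel
  obtain ⟨u, hu⟩ := CokernelCofork.IsColimit.desc' hc t ht
  exact ⟨u, by simpa using hu⟩

lemma conf_lift (hE : E.IsExact) {B C X : A} {i : B ⟶ C} {p : C ⟶ X} (h : E.conf i p)
    {T : A} (t : T ⟶ C) (ht : t ≫ p = 0) : ∃ u : T ⟶ B, u ≫ i = t := by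
  obtain ⟨hl⟩ := (hE.ker_coker h).isKernel
  obtain ⟨u, hu⟩ := KernelFork.IsLimit.lift' hl t ht
  exact ⟨u, by simpa using hu⟩

/-- Pushout of a conflation along an arbitrary morphism is a conflation with the same
cokernel object. -/
lemma pushout_conf (hE : E.IsExact) {X Y Z W P : A} {i : X ⟶ Y} {p : Y ⟶ Z}
    (h : E.conf i p) {f : X ⟶ W} {g : Y ⟶ P} {i' : W ⟶ P}
    (hpo : IsPushout i f g i') :
    ∃ q : P ⟶ Z, E.conf i' q ∧ g ≫ q = p ∧ i' ≫ q = 0 := by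
  obtain ⟨W', g', i'', hpo', Z'', p'', hconf''⟩ := hE.pushout_inflation i f ⟨Z, p, h⟩
  -- compare the two pushouts
  have comm1 : i ≫ g = f ≫ i' := hpo.w
  have comm2 : i ≫ g' = f ≫ i'' := hpo'.w
  let ehom : W' ⟶ P := hpo'.desc g i' comm1
  let einv : P ⟶ W' := hpo.desc g' i'' comm2
  have hg'e : g' ≫ ehom = g := hpo'.inl_desc _ _ _
  have hi''e : i'' ≫ ehom = i' := hpo'.inr_desc _ _ _
  have hge : g ≫ einv = g' := hpo.inl_desc _ _ _
  have hi'e : i' ≫ einv = i'' := hpo.inr_desc _ _ _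
  have hei : ehom ≫ einv = 𝟙 W' := by
    apply hpo'.hom_ext
    · rw [← Category.assoc, hg'e, hge, Category.comp_id]
    · rw [← Category.assoc, hi''e, hi'e, Category.comp_id]
  have hie : einv ≫ ehom = 𝟙 P := by
    apply hpo.hom_ext
    · rw [← Category.assoc, hge, hg'e, Category.comp_id]
    · rw [← Category.assoc, hi'e, hi''e, Category.comp_id]
  -- transport the conflation through the iso
  have hconf3 : E.conf i' (einv ≫ p'') := by
    refine hE.iso_closed (Iso.refl W) ⟨ehom, einv, hei, hie⟩ (Iso.refl Z'') ?_ ?_ hconf''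
    · simpa using hi''e
    · simp only [Iso.refl_hom, Category.comp_id]
      rw [← Category.assoc, hei, Category.id_comp]
  -- the natural candidate for the deflation to `Z`
  have hip0 : i ≫ p = f ≫ (0 : W ⟶ Z) := by rw [conf_w hE h, comp_zero]
  let q : P ⟶ Z := hpo.desc p 0 hip0
  have hgq : g ≫ q = p := hpo.inl_desc _ _ _
  have hiq : i' ≫ q = (0 : W ⟶ Z) := hpo.inr_desc _ _ _
  have hi'p3 : i' ≫ (einv ≫ p'') = 0 := conf_w hE hconf3
  obtain ⟨φ, hφ⟩ := conf_desc hE hconf3 q hiq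
  have higp3 : i ≫ (g ≫ einv ≫ p'') = 0 := by
    rw [← Category.assoc, comm1, Category.assoc, hi'p3, comp_zero]
  obtain ⟨ψ, hψ⟩ := conf_desc hE h (g ≫ einv ≫ p'') higp3
  have hqψ : q ≫ ψ = einv ≫ p'' := by
    apply hpo.hom_ext
    · rw [← Category.assoc, hgq, hψ]
    · rw [← Category.assoc, hiq, zero_comp, hi'p3]
  have hp3epi : Epi (einv ≫ p'') := conf_epi hE hconf3
  have hpepi : Epi p := conf_epi hE h
  have hφψ : φ ≫ ψ = 𝟙 Z'' := by
    rw [← cancel_epi (einv ≫ p''), Category.comp_id]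
    simp only [Category.assoc]
    rw [reassoc_of% hφ, hqψ]
  have hψφ : ψ ≫ φ = 𝟙 Z := by
    rw [← cancel_epi p, Category.comp_id, reassoc_of% hψ, ← Category.assoc einv, hφ, hgq]
  refine ⟨q, ?_, hgq, hiq⟩
  refine hE.iso_closed (Iso.refl W) (Iso.refl P) ⟨φ, ψ, hφψ, hψφ⟩ (by simp) ?_ hconf3
  simpa using hφ

/-- Pullback of a conflation along an arbitrary morphism is a conflation with the same
kernel object. -/
lemma pullback_conf (hE : E.IsExact) {X Y Z W : A} {i : X ⟶ Y} {p : Y ⟶ Z}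
    (h : E.conf i p) (f : W ⟶ Z) :
    ∃ (D : A) (d : D ⟶ Y) (q : D ⟶ W) (iD : X ⟶ D),
      IsPullback d q p f ∧ E.conf iD q ∧ iD ≫ d = i ∧ d ≫ p = q ≫ f := by
  obtain ⟨D, d, q, hpb, K, k, hconfK⟩ := hE.pullback_deflation p f ⟨X, i, h⟩
  have hip0 : i ≫ p = (0 : X ⟶ W) ≫ f := by rw [conf_w hE h, zero_comp]
  let iD : X ⟶ D := hpb.lift i 0 hip0
  have hiDd : iD ≫ d = i := hpb.lift_fst _ _ _
  have hiDq : iD ≫ q = (0 : X ⟶ W) := hpb.lift_snd _ _ _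
  have hkq : k ≫ q = 0 := conf_w hE hconfK
  have hkgp : (k ≫ d) ≫ p = 0 := by
    rw [Category.assoc, hpb.w, ← Category.assoc, hkq, zero_comp]
  obtain ⟨ψ, hψ⟩ := conf_lift hE h (k ≫ d) hkgp
  obtain ⟨φ, hφ⟩ := conf_lift hE hconfK iD hiDq
  have hmonoi : Mono i := conf_mono hE h
  have hmonok : Mono k := conf_mono hE hconfK
  have hψiD : ψ ≫ iD = k := by
    apply hpb.hom_ext
    · rw [Category.assoc, hiDd, hψ]
    · rw [Category.assoc, hiDq, comp_zero, hkq]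
  have hφψ : φ ≫ ψ = 𝟙 X := by
    rw [← cancel_mono i, Category.assoc, hψ, reassoc_of% hφ, hiDd, Category.id_comp]
  have hψφ : ψ ≫ φ = 𝟙 K := by
    rw [← cancel_mono k, Category.assoc, hφ, hψiD, Category.id_comp]
  refine ⟨D, d, q, iD, hpb, ?_, hiDd, hpb.w⟩
  refine hE.iso_closed ⟨ψ, φ, hψφ, hφψ⟩ (Iso.refl D) (Iso.refl W) ?_ (by simp) hconfK
  simpa using hψiD.symm

end BETHelpers

variable [HasCoproducts.{w} A]

section BETMain

variable {E : ExactStructureData A}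

/-- `Ext(a, -) = 0` is closed under coproducts of copies of `a`. -/
lemma extZero_sigma (hE : E.IsExact) {A0 A1 : A} (a : A0 ⟶ A1) (ι : Type w)
    {B0 B1 : A} (b : B0 ⟶ B1) (hb : ExtZero E a b) :
    ExtZero E (Limits.Sigma.map fun _ : ι => a) b := by
  intro C i p hip C' cc i' p' hpo hcp hi'p'
  have key : ∀ z : ι, ∃ sz : A0 ⟶ C',
      sz ≫ p' = a ≫ Sigma.ι (fun _ : ι => A1) z := by
    intro z
    obtain ⟨D, d, q, iD, hpb, hDconf, hiDd, hdp⟩ :=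
      pullback_conf hE hip (Sigma.ι (fun _ : ι => A1) z)
    obtain ⟨W, gW, i'', hpoW, hinfl⟩ := hE.pushout_inflation iD b ⟨_, q, hDconf⟩
    obtain ⟨qW, hWconf, hgq, hi''q⟩ := pushout_conf hE hDconf hpoW
    obtain ⟨s', hs'⟩ := hb iD q hDconf gW i'' qW hpoW hgq hi''q
    have hcomm : iD ≫ (d ≫ cc) = b ≫ i' := by
      rw [← Category.assoc, hiDd, hpo.w]
    let w : W ⟶ C' := hpoW.desc (d ≫ cc) i' hcomm
    have hgw : gW ≫ w = d ≫ cc := hpoW.inl_desc _ _ _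
    have hiw : i'' ≫ w = i' := hpoW.inr_desc _ _ _
    have hw : w ≫ p' = qW ≫ Sigma.ι (fun _ : ι => A1) z := by
      apply hpoW.hom_ext
      · rw [← Category.assoc, hgw, Category.assoc, hcp, hdp, ← Category.assoc, hgq]
      · rw [← Category.assoc, hiw, hi'p', ← Category.assoc, hi''q, zero_comp]
    exact ⟨s' ≫ w, by rw [Category.assoc, hw, ← Category.assoc, hs']⟩
  choose sz hsz using key
  refine ⟨Sigma.desc sz, Sigma.hom_ext _ _ fun z => ?_⟩
  simp [hsz z]

/-- The main construction of the Bongartz–Eklof–Trlifaj lemma. -/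
lemma bet_aux (E : ExactStructureData A) (hE : E.IsExact)
    (hco : HasExactCoproducts.{w} E) {A0 A1 : A} (a : A0 ⟶ A1)
    (B : A) {ι : Type w} (C0 C1 : ι → A) (c : ∀ z, C0 z ⟶ C1 z)
    (i0 : ∀ z, B ⟶ C0 z) (p0 : ∀ z, C0 z ⟶ A0)
    (i1 : ∀ z, B ⟶ C1 z) (p1 : ∀ z, C1 z ⟶ A1)
    (hconf : ∀ z, IsArrowConf E (𝟙 B) (c z) a (i0 z) (p0 z) (i1 z) (p1 z))
    (hrep : ∀ ⦃D0 D1 : A⦄ (d : D0 ⟶ D1) (j0 : B ⟶ D0) (q0 : D0 ⟶ A0)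
        (j1 : B ⟶ D1) (q1 : D1 ⟶ A1),
      IsArrowConf E (𝟙 B) d a j0 q0 j1 q1 →
      ∃ z, ArrowConfEquiv (c z) (i0 z) (p0 z) (i1 z) (p1 z) d j0 q0 j1 q1)
    {P0 P1 : A} (h0 : (∐ C0) ⟶ P0) (m0 : B ⟶ P0) (h1 : (∐ C1) ⟶ P1) (m1 : B ⟶ P1)
    (hpo0 : IsPushout (Limits.Sigma.map i0) (Limits.Sigma.desc fun _ => 𝟙 B) h0 m0)
    (hpo1 : IsPushout (Limits.Sigma.map i1) (Limits.Sigma.desc fun _ => 𝟙 B) h1 m1)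
    (cP : P0 ⟶ P1) (hcP : h0 ≫ cP = Limits.Sigma.map c ≫ h1) (hm : m0 ≫ cP = m1) :
    IsSpecialPreenvelope E (fun _ _ b => ExtZero E a b) m0 := by
  have hS0 : E.conf (Limits.Sigma.map i0) (Limits.Sigma.map p0) :=
    hco ι (fun _ => B) C0 (fun _ => A0) i0 p0 fun z => (hconf z).1
  have hS1 : E.conf (Limits.Sigma.map i1) (Limits.Sigma.map p1) :=
    hco ι (fun _ => B) C1 (fun _ => A1) i1 p1 fun z => (hconf z).2.1
  obtain ⟨q0, hq0conf, hh0q0, hm0q0⟩ := pushout_conf hE hS0 hpo0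
  obtain ⟨q1, hq1conf, hh1q1, hm1q1⟩ := pushout_conf hE hS1 hpo1
  constructor
  · -- `m0` belongs to `a⊥`
    intro C i p hip C' cc i' p' hpo hcp hi'p'
    obtain ⟨D, d, q, iD, hpb, hDconf, hiDd, hdp⟩ := pullback_conf hE hip a
    have harr : IsArrowConf E (𝟙 B) d a iD q i p :=
      ⟨hDconf, hip, by rw [hiDd, Category.id_comp], hdp.symm⟩
    obtain ⟨z, e0, e1, _, h_i0, h_p0, h_i1, h_p1⟩ := hrep d iD q i p harr
    set u : D ⟶ P0 := e0.inv ≫ Sigma.ι C0 z ≫ h0 with hu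
    have hiDe : iD ≫ e0.inv = i0 z := by rw [← h_i0, Category.assoc, Iso.hom_inv_id,
      Category.comp_id]
    have hmu : iD ≫ u = m0 := by
      rw [hu, ← Category.assoc, hiDe]
      have : i0 z ≫ Sigma.ι C0 z ≫ h0
          = Sigma.ι (fun _ : ι => B) z ≫ Limits.Sigma.map i0 ≫ h0 := by
        rw [← Category.assoc, ← Category.assoc]
        congr 1
        simp
      rw [this, hpo0.w]
      simp
    set s₀ : D ⟶ C' := d ≫ cc - u ≫ i' with hs₀
    have hiDs₀ : iD ≫ s₀ = 0 := by
      rw [hs₀, Preadditive.comp_sub, ← Category.assoc, ← Category.assoc, hiDd, hmu, hpo.w,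
        sub_self]
    obtain ⟨s, hs⟩ := conf_desc hE hDconf s₀ hiDs₀
    have hqepi : Epi q := conf_epi hE hDconf
    refine ⟨s, ?_⟩
    rw [← cancel_epi q, ← Category.assoc, hs, hs₀, Preadditive.sub_comp, Category.assoc,
      Category.assoc, hcp, hi'p', comp_zero, sub_zero, hdp]
  · -- the special preenvelope data
    refine ⟨∐ (fun _ : ι => A0), ∐ (fun _ : ι => A1), P1, q0, m1, q1, cP,
      Limits.Sigma.map (fun _ : ι => a), hq0conf, hq1conf, hm, ?_, ?_⟩
    · apply hpo0.hom_ext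
      · rw [← Category.assoc, hh0q0, ← Category.assoc, hcP, Category.assoc, hh1q1,
          Limits.Sigma.map_comp_map, Limits.Sigma.map_comp_map]
        congr 1
        funext z
        exact (hconf z).2.2.2
      · rw [← Category.assoc, hm0q0, zero_comp, ← Category.assoc, hm, hm1q1]
    · exact fun B0 B1 b hb => extZero_sigma hE a ι b hb

end BETMain

/-- the Bongartz–Eklof–Trlifaj Lemma.  Let `a : A0 ⟶ A1` be a
morphism of an exact category with exact coproducts.  For an object `B` such that
`Ext_{Arr(A)}(a, 1_B)` is a set — witnessed by a set-indexed family of conflations of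
arrows `1_B ⟶ c ζ ⟶ a` representing every such conflation up to equivalence — the
pushout `m = ⨿_{1_B} m^ζ` of the inflations `m^ζ : 1_B ⟶ c ζ` in the arrow category
(computed componentwise by the two pushout squares below) has domain component
`m0 : B ⟶ P0` a special `a⊥`-preenvelope of `B`.  In particular, if the relevant
`Ext`-groups are sets for every object, the ideal `a⊥` is special preenveloping. -/
theorem statement15 (E : ExactStructureData A) (hE : E.IsExact)
    (hco : HasExactCoproducts.{w} E) {A0 A1 : A} (a : A0 ⟶ A1) :
    (∀ (B : A) {ι : Type w} (C0 C1 : ι → A) (c : ∀ z, C0 z ⟶ C1 z)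
        (i0 : ∀ z, B ⟶ C0 z) (p0 : ∀ z, C0 z ⟶ A0)
        (i1 : ∀ z, B ⟶ C1 z) (p1 : ∀ z, C1 z ⟶ A1),
        (∀ z, IsArrowConf E (𝟙 B) (c z) a (i0 z) (p0 z) (i1 z) (p1 z)) →
        (∀ ⦃D0 D1 : A⦄ (d : D0 ⟶ D1) (j0 : B ⟶ D0) (q0 : D0 ⟶ A0)
            (j1 : B ⟶ D1) (q1 : D1 ⟶ A1),
          IsArrowConf E (𝟙 B) d a j0 q0 j1 q1 →
          ∃ z, ArrowConfEquiv (c z) (i0 z) (p0 z) (i1 z) (p1 z) d j0 q0 j1 q1) →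
        ∀ ⦃P0 P1 : A⦄ (h0 : (∐ C0) ⟶ P0) (m0 : B ⟶ P0) (h1 : (∐ C1) ⟶ P1) (m1 : B ⟶ P1),
          IsPushout (Limits.Sigma.map i0) (Limits.Sigma.desc fun _ => 𝟙 B) h0 m0 →
          IsPushout (Limits.Sigma.map i1) (Limits.Sigma.desc fun _ => 𝟙 B) h1 m1 →
          ∀ (cP : P0 ⟶ P1), h0 ≫ cP = Limits.Sigma.map c ≫ h1 → m0 ≫ cP = m1 →
            IsSpecialPreenvelope E (fun _ _ b => ExtZero E a b) m0) ∧
    ((∀ B : A, ExtArrowSmall.{w} E a (𝟙 B)) →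
        SpecialPreenveloping E (fun _ _ b => ExtZero E a b)) := by
  refine ⟨fun B ι C0 C1 c i0 p0 i1 p1 hconf hrep P0 P1 h0 m0 h1 m1 hpo0 hpo1 cP hcP hm =>
    bet_aux E hE hco a B C0 C1 c i0 p0 i1 p1 hconf hrep h0 m0 h1 m1 hpo0 hpo1 cP hcP hm,
    fun hsmall B => ?_⟩
  obtain ⟨ι, C0, C1, c, i0, p0, i1, p1, hconf, hrep⟩ := hsmall B
  have hS0 : E.conf (Limits.Sigma.map i0) (Limits.Sigma.map p0) :=
    hco ι (fun _ => B) C0 (fun _ => A0) i0 p0 fun z => (hconf z).1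
  have hS1 : E.conf (Limits.Sigma.map i1) (Limits.Sigma.map p1) :=
    hco ι (fun _ => B) C1 (fun _ => A1) i1 p1 fun z => (hconf z).2.1
  obtain ⟨P0, h0, m0, hpo0, -⟩ := hE.pushout_inflation (Limits.Sigma.map i0)
    (Limits.Sigma.desc fun _ => 𝟙 B) ⟨_, Limits.Sigma.map p0, hS0⟩
  obtain ⟨P1, h1, m1, hpo1, -⟩ := hE.pushout_inflation (Limits.Sigma.map i1)
    (Limits.Sigma.desc fun _ => 𝟙 B) ⟨_, Limits.Sigma.map p1, hS1⟩
  have hcomm : Limits.Sigma.map i0 ≫ Limits.Sigma.map c ≫ h1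
      = (Limits.Sigma.desc fun _ => 𝟙 B) ≫ m1 := by
    rw [← hpo1.w, ← Category.assoc, Limits.Sigma.map_comp_map]
    congr 2
    funext z
    rw [(hconf z).2.2.1, Category.id_comp]
  exact ⟨P0, m0, bet_aux E hE hco a B C0 C1 c i0 p0 i1 p1 hconf hrep h0 m0 h1 m1 hpo0 hpo1
    (hpo0.desc (Limits.Sigma.map c ≫ h1) m1 hcomm) (hpo0.inl_desc _ _ _) (hpo0.inr_desc _ _ _)⟩

end IdealApprox
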